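/- Parametrize the real points of the Klein quadric by X = s(u·e₁₂ + conj(u)·e₃₄ + p·e₁₃ − conj(p)·e₄₂ + q·e₁₄ − conj(q)·e₂₃) with |u|² = 1 and |p|² + |q|² = 1, s ≠ 0. Then |s|^{−2}·dX^{αβ}·dconj(X)_{αβ} = |du|² − |dp|² − |dq|²; in particular the terms involving ds and dconj(s) cancel. -/
import Mathlib


open Finset

/-- The signs of the (2,2)-signature conjugation on the orthonormal basis. -/
noncomputable def sgn4 : Fin 4 → ℂ := ![1, 1, -1, -1]

/-- Parametrizing the real points of the Klein quadric by
`X = s(u·e₁₂ + ū·e₃₄ + p·e₁₃ − p̄·e₄₂ + q·e₁₄ − q̄·e₂₃)` with `|u|² = 1`,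
`|p|² + |q|² = 1`, `s ≠ 0`, and letting `s', u', p', q'` be the derivatives of
the parameters along a motion respecting the constraints, the quadratic form
`|s|⁻²·dX^{αβ}·d(conj X)_{αβ}` equals `|du|² − |dp|² − |dq|²`; in particular the
terms involving `ds` cancel. -/
theorem stmt13 (s u p q s' u' p' q' : ℂ) (hs : s ≠ 0)
    (hu : u * star u = 1) (hpq : p * star p + q * star q = 1)
    (hu' : star u * u' + u * star u' = 0)
    (hpq' : star p * p' + p * star p' + star q * q' + q * star q' = 0) :
    -- the derivative dX of X = s(u·e₁₂ + ū·e₃₄ + p·e₁₃ − p̄·e₄₂ + q·e₁₄ − q̄·e₂₃)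
    (fun dX : Fin 4 → Fin 4 → ℂ =>
        (s * star s)⁻¹ *
          ((1 / 4) * ∑ a, ∑ b, sgn4 a * sgn4 b * dX a b * star (dX a b)) =
          u' * star u' - p' * star p' - q' * star q')
      (fun a b =>
        !![0, s' * u + s * u', s' * p + s * p', s' * q + s * q';
           -(s' * u + s * u'), 0, -(s' * star q + s * star q'),
             s' * star p + s * star p';
           -(s' * p + s * p'), s' * star q + s * star q', 0,
             s' * star u + s * star u';
           -(s' * q + s * q'), -(s' * star p + s * star p'),
             -(s' * star u + s * star u'), 0] a b) := by
  have hss : (s * star s) ≠ 0 := mul_ne_zero hs (star_ne_zero.mpr hs)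
  simp only [Fin.sum_univ_four, sgn4, Matrix.cons_val', Matrix.cons_val_zero,
    Matrix.cons_val_one, Matrix.head_cons, Matrix.head_fin_const, Matrix.cons_val_fin_one,
    Matrix.empty_val', Matrix.cons_val_two, Matrix.cons_val_three, Matrix.tail_cons,
    Matrix.head_fin_const, Matrix.of_apply, star_zero, star_neg, star_add, star_mul', star_star]
  rw [inv_mul_eq_iff_eq_mul₀ hss]
  linear_combination (s' * star s') * hu - (s' * star s') * hpq +
    ((s' * star s + star s' * s)/2) * hu' - ((s' * star s + star s' * s)/2) * hpq'
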